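/- The integral identity -√2 ∫_ℝ [U''(H_{0,1}(x)) - 2] e^{-√2 x} H'_{0,1}(x) dx = 4√2 holds, where U(φ) = φ²(1-φ²)² and H_{0,1}(x) = e^{√2 x}(1+e^{2√2 x})^{-1/2}. Equivalently, -2 ∫_ℝ [6 H_{0,1}(x)⁵ - 8 H_{0,1}(x)³] e^{-√2 x} dx = 4√2. -/

import Mathlib

/-!
Write `t = exp (√2 x)` and `V = (1 + t²)^(-1/2)`, so that `H = t V`, `H' = √2 t V³` and
`V' = -√2 t² V³`. Using `t² V² = 1 - V²`, both integrands become combinations of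
`W n = t² V^(n+2) = -(V^n)' / (n √2)`, and since `V` decreases from `1` to `0`, each `W n` with
`n ≠ 0` is integrable with integral `1 / (n √2)`.
-/

open Real MeasureTheory

noncomputable def U (φ : ℝ) : ℝ := φ ^ 2 * (1 - φ ^ 2) ^ 2

noncomputable def H (x : ℝ) : ℝ :=
  Real.exp (Real.sqrt 2 * x) / Real.sqrt (1 + Real.exp (2 * Real.sqrt 2 * x))

open Filter Topology Set

theorem integrable_of_hasDerivAt_of_nonpos {f f' : ℝ → ℝ} {m n : ℝ}
    (hderiv : ∀ x, HasDerivAt f (f' x) x) (hf' : ∀ x, f' x ≤ 0)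
    (hbot : Tendsto f atBot (𝓝 m)) (htop : Tendsto f atTop (𝓝 n)) : Integrable f' := by
  have hIoi : IntegrableOn f' (Ioi 0) :=
    integrableOn_Ioi_deriv_of_nonpos' (fun x _ ↦ hderiv x) (fun x _ ↦ hf' x) htop
  have hIio : IntegrableOn f' (Iio 0) := by
    -- reflect `x ↦ -x` to reduce to the half-line `(0, ∞)`
    have h : IntegrableOn (fun x ↦ -f' (-x)) (Ioi 0) :=
      integrableOn_Ioi_deriv_of_nonneg' (g := fun x ↦ f (-x))
        (fun x _ ↦ by simpa [Function.comp_def] using (hderiv (-x)).scomp x (hasDerivAt_neg' x))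
        (fun x _ ↦ neg_nonneg.2 (hf' _)) (hbot.comp tendsto_neg_atTop_atBot)
    simpa [Function.comp_def] using ((MeasurePreserving.integrableOn_comp_preimage
      (Measure.measurePreserving_neg _) (Homeomorph.neg ℝ).measurableEmbedding).2 h.neg)
  rw [← integrableOn_univ, ← Iic_union_Ioi (a := (0:ℝ))]
  exact (integrableOn_Iic_iff_integrableOn_Iio (f := f')).2 hIio |>.union hIoi

noncomputable def V (x : ℝ) : ℝ := (√(1 + exp (√2 * x) ^ 2))⁻¹

noncomputable def W (n : ℕ) (x : ℝ) : ℝ := exp (√2 * x) ^ 2 * V x ^ (n + 2)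

lemma one_add_exp_sq_pos (x : ℝ) : 0 < 1 + exp (√2 * x) ^ 2 := by positivity

lemma V_pos (x : ℝ) : 0 < V x := by unfold V; positivity

lemma V_sq_mul_one_add_exp_sq (x : ℝ) : V x ^ 2 * (1 + exp (√2 * x) ^ 2) = 1 := by
  rw [V, inv_pow, sq_sqrt (one_add_exp_sq_pos x).le, inv_mul_cancel₀ (one_add_exp_sq_pos x).ne']

lemma H_eq_exp_mul_V (x : ℝ) : H x = exp (√2 * x) * V x := by
  rw [H, V, div_eq_mul_inv, sq, ← exp_add]
  ring_nf

lemma hasDerivAt_exp_sqrt_two_mul (x : ℝ) :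
    HasDerivAt (fun x ↦ exp (√2 * x)) (exp (√2 * x) * √2) x := by
  simpa using ((hasDerivAt_id x).const_mul √2).exp

lemma hasDerivAt_V (x : ℝ) : HasDerivAt V (-√2 * exp (√2 * x) ^ 2 * V x ^ 3) x := by
  have h : HasDerivAt V _ x := ((((hasDerivAt_exp_sqrt_two_mul x).pow 2).const_add 1).sqrt
    (one_add_exp_sq_pos x).ne').inv (Real.sqrt_pos.2 (one_add_exp_sq_pos x)).ne'
  refine h.congr_deriv ?_
  simp only [Pi.pow_apply, V]
  field_simp
  norm_num [mul_comm]

lemma hasDerivAt_V_pow (n : ℕ) (x : ℝ) :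
    HasDerivAt (fun x ↦ V x ^ n) (-(n * √2) * W n x) x := by
  refine ((hasDerivAt_V x).pow n).congr_deriv ?_
  cases n with
  | zero => simp
  | succ n => rw [W]; push_cast; ring

lemma tendsto_V_atTop : Tendsto V atTop (𝓝 0) :=
  tendsto_inv_atTop_zero.comp <| tendsto_sqrt_atTop.comp <| tendsto_atTop_add_const_left _ 1 <|
    (tendsto_pow_atTop two_ne_zero).comp <|
      tendsto_exp_atTop.comp (tendsto_id.const_mul_atTop (by positivity))

lemma tendsto_V_atBot : Tendsto V atBot (𝓝 1) := by
  have hE : Tendsto (fun x ↦ exp (√2 * x)) atBot (𝓝 0) :=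
    tendsto_exp_atBot.comp (tendsto_id.const_mul_atBot (by positivity))
  have h := (((hE.pow 2).const_add 1).sqrt).inv₀ (by norm_num)
  norm_num at h
  exact h

lemma W_nonneg (n : ℕ) (x : ℝ) : 0 ≤ W n x := by
  have := V_pos x
  unfold W; positivity

lemma integrable_W {n : ℕ} (hn : n ≠ 0) : Integrable (W n) := by
  have hc : -(n * √2) ≠ 0 := by simp [hn]
  have h := integrable_of_hasDerivAt_of_nonpos (hasDerivAt_V_pow n)
    (fun x ↦ mul_nonpos_of_nonpos_of_nonneg (neg_nonpos.2 (by positivity)) (W_nonneg n x))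
    (tendsto_V_atBot.pow n) (tendsto_V_atTop.pow n)
  exact (integrable_const_mul_iff (IsUnit.mk0 _ hc) _).1 h

lemma integral_W {n : ℕ} (hn : n ≠ 0) : ∫ x, W n x = (n * √2)⁻¹ := by
  have h := integral_of_hasDerivAt_of_tendsto (hasDerivAt_V_pow n)
    ((integrable_W hn).const_mul _) (tendsto_V_atBot.pow n) (tendsto_V_atTop.pow n)
  rw [integral_const_mul, one_pow, zero_pow hn] at h
  field_simp
  linarith

lemma deriv_U : deriv U = fun φ ↦ 2 * φ - 8 * φ ^ 3 + 6 * φ ^ 5 := by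
  ext φ
  have h : HasDerivAt U _ φ :=
    (hasDerivAt_pow 2 φ).mul (((hasDerivAt_const φ 1).sub (hasDerivAt_pow 2 φ)).pow 2)
  rw [h.deriv]
  simp only [Pi.sub_apply]
  push_cast
  ring

lemma deriv_deriv_U (φ : ℝ) : deriv (deriv U) φ = 2 - 24 * φ ^ 2 + 30 * φ ^ 4 := by
  rw [deriv_U]
  have h : HasDerivAt (fun φ ↦ 2 * φ - 8 * φ ^ 3 + 6 * φ ^ 5) _ φ :=
    (((hasDerivAt_id φ).const_mul 2).sub ((hasDerivAt_pow 3 φ).const_mul 8)).add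
      ((hasDerivAt_pow 5 φ).const_mul 6)
  rw [h.deriv]
  push_cast
  ring

lemma hasDerivAt_H (x : ℝ) : HasDerivAt H (√2 * exp (√2 * x) * V x ^ 3) x := by
  have h : HasDerivAt (fun x ↦ exp (√2 * x) * V x) _ x :=
    (hasDerivAt_exp_sqrt_two_mul x).mul (hasDerivAt_V x)
  rw [show H = fun x ↦ exp (√2 * x) * V x from funext H_eq_exp_mul_V]
  refine h.congr_deriv ?_
  linear_combination (-√2 * exp (√2 * x) * V x) * V_sq_mul_one_add_exp_sq x

lemma first_integrand_eq (x : ℝ) :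
    (deriv (deriv U) (H x) - 2) * exp (-√2 * x) * deriv H x = √2 * (6 * W 3 x - 30 * W 5 x) := by
  rw [(hasDerivAt_H x).deriv, deriv_deriv_U, H_eq_exp_mul_V, neg_mul, exp_neg, W, W]
  field_simp
  linear_combination (30 * exp (√2 * x) ^ 2 * V x ^ 5) * V_sq_mul_one_add_exp_sq x

lemma second_integrand_eq (x : ℝ) :
    (6 * H x ^ 5 - 8 * H x ^ 3) * exp (-√2 * x) = -2 * W 1 x - 6 * W 3 x := by
  rw [H_eq_exp_mul_V, neg_mul, exp_neg, W, W]
  field_simp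
  linear_combination (6 * V x ^ 3) * V_sq_mul_one_add_exp_sq x

theorem key_integral_identity :
    (-(Real.sqrt 2)) * ∫ x : ℝ,
        (deriv (deriv U) (H x) - 2) * Real.exp (-(Real.sqrt 2) * x) * deriv H x
      = 4 * Real.sqrt 2 ∧
    (-2 : ℝ) * ∫ x : ℝ,
        (6 * H x ^ 5 - 8 * H x ^ 3) * Real.exp (-(Real.sqrt 2) * x)
      = 4 * Real.sqrt 2 := by
  have hW : ∀ n ≠ 0, ∀ c : ℝ, Integrable fun x ↦ c * W n x := fun n hn c ↦
    (integrable_W hn).const_mul c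
  have hs : √2 ^ 2 = 2 := sq_sqrt zero_le_two
  simp only [first_integrand_eq, second_integrand_eq]
  rw [integral_const_mul, integral_sub (hW 3 (by norm_num) 6) (hW 5 (by norm_num) 30),
    integral_sub (hW 1 (by norm_num) (-2)) (hW 3 (by norm_num) 6)]
  simp only [integral_const_mul, integral_W one_ne_zero, integral_W three_ne_zero,
    integral_W (by norm_num : 5 ≠ 0)]
  constructor
  · field_simp; ring
  · field_simp; linear_combination -12 * hs
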